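/- σ_B² − σ_A² = E[{β_t(Z) − β(Z)}^T Σ(Z) {β_t(Z) − β(Z)}]/π_t + E[{β_s(Z) − β(Z)}^T Σ(Z) {β_s(Z) − β(Z)}]/π_s − E[{β_t(Z) − β_s(Z)}^T Σ(Z) {β_t(Z) − β_s(Z)}]. -/

import Mathlib

/-!
Within each stratum `Z = z` this is Pythagoras for the least-squares projection of `Y⁽ᵗ⁾`
on `X`: the normal equations `Σ(z) β_t(z) = cov(X, Y⁽ᵗ⁾ | Z = z)` make the residual
`Y⁽ᵗ⁾ − Xᵀβ_t(z)` uncorrelated with every linear function of `X`, so for any `b`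
`var(Y⁽ᵗ⁾ − Xᵀb | Z = z) = var(Y⁽ᵗ⁾ − Xᵀβ_t(z) | Z = z) + (β_t(z) − b)ᵀ Σ(z) (β_t(z) − b)`.
Taking `b = β(z)` for treatments `t` and `s`, and averaging over `z`, gives the identity.
-/

open MeasureTheory ProbabilityTheory Matrix
open scoped ProbabilityTheory

lemma MeasureTheory.MemLp.cond {Ω E : Type*} [MeasurableSpace Ω] [NormedAddCommGroup E]
    {μ : Measure Ω} {f : Ω → E} {p : ENNReal} {s : Set Ω} (hf : MemLp f p μ) (hs : μ s ≠ 0) :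
    MemLp f p μ[|s] :=
  (hf.restrict s).smul_measure (ENNReal.inv_ne_top.mpr hs)

namespace ProbabilityTheory

variable {Ω ι : Type*} [MeasurableSpace Ω] {μ : Measure Ω} {X : Ω → ι → ℝ} {Y : Ω → ℝ}

noncomputable def covarianceMatrix (X : Ω → ι → ℝ) (μ : Measure Ω) : Matrix ι ι ℝ :=
  .of fun i j => cov[fun ω => X ω i, fun ω => X ω j; μ]

noncomputable def crossCovariance (X : Ω → ι → ℝ) (Y : Ω → ℝ) (μ : Measure Ω) : ι → ℝ :=
  fun i => cov[fun ω => X ω i, Y; μ]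

section ProbabilityMeasure

variable [IsProbabilityMeasure μ]

lemma covarianceMatrix_eq_of_moments (hX : ∀ i, MemLp (fun ω => X ω i) 2 μ)
    {S : Matrix ι ι ℝ}
    (hS : ∀ i j, S i j = ∫ ω, X ω i * X ω j ∂μ - (∫ ω, X ω i ∂μ) * ∫ ω, X ω j ∂μ) :
    S = covarianceMatrix X μ := by
  ext i j
  rw [hS, covarianceMatrix, of_apply, covariance_eq_sub (hX i) (hX j)]
  rfl

lemma crossCovariance_eq_moments (hX : ∀ i, MemLp (fun ω => X ω i) 2 μ) (hY : MemLp Y 2 μ) :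
    crossCovariance X Y μ
      = fun i => ∫ ω, X ω i * Y ω ∂μ - (∫ ω, X ω i ∂μ) * ∫ ω, Y ω ∂μ := by
  ext i
  rw [crossCovariance, covariance_eq_sub (hX i) hY]
  rfl

end ProbabilityMeasure

variable [Fintype ι]

lemma memLp_dotProduct (hX : ∀ i, MemLp (fun ω => X ω i) 2 μ) (v : ι → ℝ) :
    MemLp (fun ω => X ω ⬝ᵥ v) 2 μ :=
  memLp_finsetSum _ fun i _ => (hX i).mul_const (v i)

section FiniteMeasure

variable [IsFiniteMeasure μ]

lemma covariance_dotProduct_left (hX : ∀ i, MemLp (fun ω => X ω i) 2 μ) (hY : MemLp Y 2 μ)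
    (v : ι → ℝ) :
    cov[fun ω => X ω ⬝ᵥ v, Y; μ] = v ⬝ᵥ crossCovariance X Y μ := by
  rw [dotProduct_comm]
  exact (covariance_fun_sum_left (fun i => (hX i).mul_const (v i)) hY).trans
    (by simp only [covariance_mul_const_left, dotProduct, crossCovariance])

lemma covariance_dotProduct_dotProduct (hX : ∀ i, MemLp (fun ω => X ω i) 2 μ) (v w : ι → ℝ) :
    cov[fun ω => X ω ⬝ᵥ v, fun ω => X ω ⬝ᵥ w; μ] = v ⬝ᵥ (covarianceMatrix X μ *ᵥ w) := by
  rw [covariance_dotProduct_left hX (memLp_dotProduct hX w)]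
  congr 1
  ext i
  rw [crossCovariance, covariance_comm, covariance_dotProduct_left hX (hX i), mulVec,
    dotProduct_comm]
  simp only [dotProduct, covarianceMatrix, crossCovariance, of_apply, covariance_comm]

lemma variance_dotProduct (hX : ∀ i, MemLp (fun ω => X ω i) 2 μ) (v : ι → ℝ) :
    Var[fun ω => X ω ⬝ᵥ v; μ] = v ⬝ᵥ (covarianceMatrix X μ *ᵥ v) := by
  rw [← covariance_self (memLp_dotProduct hX v).aemeasurable,
    covariance_dotProduct_dotProduct hX]

lemma covariance_dotProduct_residual_eq_zero (hX : ∀ i, MemLp (fun ω => X ω i) 2 μ)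
    (hY : MemLp Y 2 μ) {β : ι → ℝ} (hβ : covarianceMatrix X μ *ᵥ β = crossCovariance X Y μ)
    (v : ι → ℝ) :
    cov[fun ω => X ω ⬝ᵥ v, fun ω => Y ω - X ω ⬝ᵥ β; μ] = 0 := by
  rw [covariance_fun_sub_right (memLp_dotProduct hX v) hY (memLp_dotProduct hX β),
    covariance_dotProduct_left hX hY, covariance_dotProduct_dotProduct hX, hβ, sub_self]

lemma variance_sub_dotProduct (hX : ∀ i, MemLp (fun ω => X ω i) 2 μ) (hY : MemLp Y 2 μ)
    {β : ι → ℝ} (hβ : covarianceMatrix X μ *ᵥ β = crossCovariance X Y μ) (b : ι → ℝ) :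
    Var[fun ω => Y ω - X ω ⬝ᵥ b; μ]
      = Var[fun ω => Y ω - X ω ⬝ᵥ β; μ] + (β - b) ⬝ᵥ (covarianceMatrix X μ *ᵥ (β - b)) := by
  have hsplit : (fun ω => Y ω - X ω ⬝ᵥ b)
      = fun ω => (Y ω - X ω ⬝ᵥ β) + X ω ⬝ᵥ (β - b) := by
    ext ω
    rw [dotProduct_sub]
    ring
  have hres : MemLp (fun ω => Y ω - X ω ⬝ᵥ β) 2 μ := hY.sub (memLp_dotProduct hX β)
  rw [hsplit, variance_fun_add hres (memLp_dotProduct hX _),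
    covariance_comm, covariance_dotProduct_residual_eq_zero hX hY hβ, variance_dotProduct hX]
  ring

end FiniteMeasure

lemma variance_sub_dotProduct_of_moments [IsProbabilityMeasure μ] [DecidableEq ι]
    (hX : ∀ i, MemLp (fun ω => X ω i) 2 μ) (hY : MemLp Y 2 μ) {S : Matrix ι ι ℝ}
    (hS : ∀ i j, S i j = ∫ ω, X ω i * X ω j ∂μ - (∫ ω, X ω i ∂μ) * ∫ ω, X ω j ∂μ)
    (hSunit : IsUnit S) {β : ι → ℝ}
    (hβ : β = S⁻¹ *ᵥ fun i => ∫ ω, X ω i * Y ω ∂μ - (∫ ω, X ω i ∂μ) * ∫ ω, Y ω ∂μ)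
    (b : ι → ℝ) :
    Var[fun ω => Y ω - X ω ⬝ᵥ b; μ]
      = Var[fun ω => Y ω - X ω ⬝ᵥ β; μ] + (β - b) ⬝ᵥ (S *ᵥ (β - b)) := by
  have hScov := covarianceMatrix_eq_of_moments hX hS
  refine hScov ▸ variance_sub_dotProduct hX hY ?_ b
  rw [← hScov, hβ, mulVec_mulVec, mul_nonsing_inv _ ((isUnit_iff_isUnit_det S).mp hSunit),
    one_mulVec, crossCovariance_eq_moments hX hY]

end ProbabilityTheory

theorem stmt4_general {Ω : Type*} [MeasurableSpace Ω] (P : Measure Ω) [IsProbabilityMeasure P]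
    {𝓩 : Type*} [Fintype 𝓩] {k d : ℕ} (π : Fin k → ℝ)
    (Y : Fin k → Ω → ℝ) (hY2 : ∀ t, MemLp (Y t) 2 P)
    (Z : Ω → 𝓩) (hZpos : ∀ z, 0 < P {ω | Z ω = z})
    (X : Ω → Fin d → ℝ) (hX2 : ∀ j, MemLp (fun ω => X ω j) 2 P)
    -- conditional measures and stratum probabilities
    (condP : 𝓩 → Measure Ω) (hcondP : ∀ z, condP z = P[|{ω | Z ω = z}])
    (pz : 𝓩 → ℝ)
    -- conditional covariance matrices, assumed positive definite
    (Smat : 𝓩 → Matrix (Fin d) (Fin d) ℝ)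
    (hSmat : ∀ z j l, Smat z j l
      = ∫ ω, X ω j * X ω l ∂(condP z)
        - (∫ ω, X ω j ∂(condP z)) * (∫ ω, X ω l ∂(condP z)))
    (hSpd : ∀ z, (Smat z).PosDef)
    -- projection coefficients
    (β : Fin k → 𝓩 → Fin d → ℝ)
    (hβ : ∀ t z, β t z = (Smat z)⁻¹ *ᵥ fun j =>
      ∫ ω, X ω j * Y t ω ∂(condP z)
        - (∫ ω, X ω j ∂(condP z)) * (∫ ω, Y t ω ∂(condP z)))
    (βb : 𝓩 → Fin d → ℝ)
    -- the two fixed treatments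
    (tt ss : Fin k)
    -- the asymptotic variance components
    (σA2 σB2 : ℝ)
    (hσA2 : σA2
      = (∑ z, pz z *
          (variance (fun ω => Y tt ω - ∑ j, X ω j * β tt z j) (condP z) / π tt
            + variance (fun ω => Y ss ω - ∑ j, X ω j * β ss z j) (condP z) / π ss))
        + ∑ z, pz z *
            ((β tt z - β ss z) ⬝ᵥ (Smat z *ᵥ (β tt z - β ss z))))
    (hσB2 : σB2 = ∑ z, pz z *
      (variance (fun ω => Y tt ω - ∑ j, X ω j * βb z j) (condP z) / π tt
        + variance (fun ω => Y ss ω - ∑ j, X ω j * βb z j) (condP z) / π ss)) :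
    σB2 - σA2
      = (∑ z, pz z * ((β tt z - βb z) ⬝ᵥ (Smat z *ᵥ (β tt z - βb z)))) / π tt
        + (∑ z, pz z * ((β ss z - βb z) ⬝ᵥ (Smat z *ᵥ (β ss z - βb z)))) / π ss
        - ∑ z, pz z * ((β tt z - β ss z) ⬝ᵥ (Smat z *ᵥ (β tt z - β ss z))) := by
  have hprob : ∀ z, IsProbabilityMeasure (condP z) := fun z => by
    rw [hcondP z]
    exact cond_isProbabilityMeasure (hZpos z).ne'
  have hmemLp : ∀ z {f : Ω → ℝ}, MemLp f 2 P → MemLp f 2 (condP z) := fun z _ hf => by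
    rw [hcondP z]
    exact hf.cond (hZpos z).ne'
  have hpyth : ∀ z t,
      variance (fun ω => Y t ω - ∑ j, X ω j * βb z j) (condP z)
        = variance (fun ω => Y t ω - ∑ j, X ω j * β t z j) (condP z)
          + (β t z - βb z) ⬝ᵥ (Smat z *ᵥ (β t z - βb z)) := fun z t =>
    variance_sub_dotProduct_of_moments (fun j => hmemLp z (hX2 j)) (hmemLp z (hY2 t))
      (hSmat z) (hSpd z).isUnit (hβ t z) (βb z)
  rw [hσB2, hσA2]
  simp only [hpyth, Finset.sum_div, ← Finset.sum_add_distrib, ← Finset.sum_sub_distrib]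
  refine Finset.sum_congr rfl fun z _ => ?_
  ring

/-- In the population setup, with `β̄(z) = ∑ ℓ, π ℓ • β ℓ z`,
`σB² − σA² = E[(β_t(Z) − β̄(Z))ᵀ Σ(Z) (β_t(Z) − β̄(Z))]/πt
  + E[(β_s(Z) − β̄(Z))ᵀ Σ(Z) (β_s(Z) − β̄(Z))]/πs
  − E[(β_t(Z) − β_s(Z))ᵀ Σ(Z) (β_t(Z) − β_s(Z))]`. -/
theorem stmt4 {Ω : Type*} [MeasurableSpace Ω] (P : Measure Ω) [IsProbabilityMeasure P]
    {𝓦 : Type*} [MeasurableSpace 𝓦]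
    {𝓩 : Type*} [Fintype 𝓩] [MeasurableSpace 𝓩] [MeasurableSingletonClass 𝓩]
    {k d : ℕ} (hk : 2 ≤ k)
    (π : Fin k → ℝ) (hπ : ∀ t, π t ∈ Set.Ioo (0 : ℝ) 1) (hπsum : ∑ t, π t = 1)
    (Y : Fin k → Ω → ℝ) (W : Ω → 𝓦)
    (hYmeas : ∀ t, Measurable (Y t)) (hWmeas : Measurable W)
    (hY2 : ∀ t, MemLp (Y t) 2 P)
    (g : 𝓦 → 𝓩) (hg : Measurable g)
    (Z : Ω → 𝓩) (hZdef : ∀ ω, Z ω = g (W ω))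
    (hZpos : ∀ z, 0 < P {ω | Z ω = z})
    (h : 𝓦 → Fin d → ℝ) (hh : Measurable h)
    (X : Ω → Fin d → ℝ) (hXdef : ∀ ω, X ω = h (W ω))
    (hX2 : ∀ j, MemLp (fun ω => X ω j) 2 P)
    (hXY2 : ∀ t j, MemLp (fun ω => X ω j * Y t ω) 2 P)
    -- conditional measures and stratum probabilities
    (condP : 𝓩 → Measure Ω) (hcondP : ∀ z, condP z = P[|{ω | Z ω = z}])
    (pz : 𝓩 → ℝ) (hpz : ∀ z, pz z = (P {ω | Z ω = z}).toReal)
    -- conditional covariance matrices, assumed positive definite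
    (Smat : 𝓩 → Matrix (Fin d) (Fin d) ℝ)
    (hSmat : ∀ z j l, Smat z j l
      = ∫ ω, X ω j * X ω l ∂(condP z)
        - (∫ ω, X ω j ∂(condP z)) * (∫ ω, X ω l ∂(condP z)))
    (hSpd : ∀ z, (Smat z).PosDef)
    -- projection coefficients
    (β : Fin k → 𝓩 → Fin d → ℝ)
    (hβ : ∀ t z, β t z = (Smat z)⁻¹ *ᵥ fun j =>
      ∫ ω, X ω j * Y t ω ∂(condP z)
        - (∫ ω, X ω j ∂(condP z)) * (∫ ω, Y t ω ∂(condP z)))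
    (βb : 𝓩 → Fin d → ℝ) (hβb : ∀ z, βb z = ∑ ℓ, π ℓ • β ℓ z)
    -- the two fixed treatments
    (tt ss : Fin k) (hts : tt ≠ ss)
    -- the asymptotic variance components
    (σA2 σB2 : ℝ)
    (hσA2 : σA2
      = (∑ z, pz z *
          (variance (fun ω => Y tt ω - ∑ j, X ω j * β tt z j) (condP z) / π tt
            + variance (fun ω => Y ss ω - ∑ j, X ω j * β ss z j) (condP z) / π ss))
        + ∑ z, pz z *
            ((β tt z - β ss z) ⬝ᵥ (Smat z *ᵥ (β tt z - β ss z))))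
    (hσB2 : σB2 = ∑ z, pz z *
      (variance (fun ω => Y tt ω - ∑ j, X ω j * βb z j) (condP z) / π tt
        + variance (fun ω => Y ss ω - ∑ j, X ω j * βb z j) (condP z) / π ss)) :
    σB2 - σA2
      = (∑ z, pz z * ((β tt z - βb z) ⬝ᵥ (Smat z *ᵥ (β tt z - βb z)))) / π tt
        + (∑ z, pz z * ((β ss z - βb z) ⬝ᵥ (Smat z *ᵥ (β ss z - βb z)))) / π ss
        - ∑ z, pz z * ((β tt z - β ss z) ⬝ᵥ (Smat z *ᵥ (β tt z - β ss z))) :=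
  stmt4_general P π Y hY2 Z hZpos X hX2 condP hcondP pz Smat hSmat hSpd β hβ βb tt ss σA2 σB2 hσA2
    hσB2
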